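/- Let D=(V,A) be a digraph with nonnegative integer arc weights w. Define g: Z^V → Z ∪ {+∞} by g(η) = min{ w(B) : B a branching in D with R(B) = supp⁺(η) } for η ∈ Z₊^V admitting such a branching, and g(η) = +∞ otherwise. Then g is an M♮-convex function: for all η, ζ ∈ dom g and u with η(u) > ζ(u), either g(η−χᵤ)+g(ζ+χᵤ) ≤ g(η)+g(ζ), or there exists v with η(v) < ζ(v) such that g(η−χᵤ+χᵥ)+g(ζ+χᵤ−χᵥ) ≤ g(η)+g(ζ). -/

import Mathlib

/-!
The value `g(η)` depends only on the support of `η`, and enlarging the prescribed root set can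
only lower the minimum weight (delete the arcs entering the new roots; weights are nonnegative).
So it suffices to exchange roots between two optimal branchings `B₁`, `B₂` with root sets `S ∋ u`
and `T ∌ u`. By Edmonds' disjoint branchings theorem for prescribed root sets, the multiset
`B₁ ⊎ B₂` splits into two branchings with root sets `R₁`, `R₂` as soon as each nonempty vertex set
`X` is entered by at least as many of its arcs as there are `Rᵢ` disjoint from `X`. For
`(S - u, T + u)` this can only fail at a set `X ∋ u` that no arc enters and that contains no other
vertex of `S`; the least such set meets `T` in some `v`, and `(S - u + v, T + u - v)` satisfies
the condition.
-/

open scoped Classical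
open Finset

variable {V : Type*} [Fintype V] [DecidableEq V]

/-- A closed directed walk (cycle) using arcs of `B`. -/
def HasCycle (B : Finset (V × V)) : Prop :=
  ∃ (n : ℕ) (f : Fin (n + 1) → V), ∀ i : Fin (n + 1), (f i, f (i + 1)) ∈ B

/-- `B` is a branching in the digraph with arc set `A`. -/
def IsBranching (A B : Finset (V × V)) : Prop :=
  B ⊆ A ∧ (∀ v : V, (B.filter (fun a => a.2 = v)).card ≤ 1) ∧ ¬ HasCycle B

/-- `R(B)`: the set of vertices with no arc of `B` entering them. -/
def rootSet (B : Finset (V × V)) : Finset V :=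
  Finset.univ.filter (fun v => ∀ a ∈ B, a.2 ≠ v)

/-- Reachability via directed paths using arcs of `A`. -/
def Reaches (A : Finset (V × V)) (u v : V) : Prop :=
  Relation.ReflTransGen (fun x y => (x, y) ∈ A) u v

/-- A source component: a strongly connected component with no entering arc. -/
def IsSourceComponent (A : Finset (V × V)) (K : Set V) : Prop :=
  (∃ v : V, K = {u : V | Reaches A u v ∧ Reaches A v u}) ∧
    ∀ a ∈ A, a.2 ∈ K → a.1 ∈ K

/-- Characteristic vector of a single vertex. -/
def chi (u : V) : V → ℤ := fun v => if v = u then 1 else 0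

/-- `gFun A w η`: the minimum weight of a branching `B` in `(V, A)` with
`R(B) = supp⁺(η)`, for `η ∈ ℤ₊^V`; `+∞` (i.e. `⊤`) otherwise. -/
noncomputable def gFun (A : Finset (V × V)) (w : V × V → ℤ) (η : V → ℤ) : WithTop ℤ :=
  if ∀ v : V, 0 ≤ η v then
    (A.powerset.filter (fun B => IsBranching A B ∧
        rootSet B = Finset.univ.filter (fun v => 0 < η v))).inf
      (fun B => ((∑ a ∈ B, w a : ℤ) : WithTop ℤ))
  else ⊤

theorem mem_rootSet {B : Finset (V × V)} {v : V} : v ∈ rootSet B ↔ ∀ a ∈ B, a.2 ≠ v := by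
  simp [rootSet]

theorem rootSet_empty : rootSet (∅ : Finset (V × V)) = univ := by
  ext v; simp [mem_rootSet]

theorem rootSet_insert (a : V × V) (B : Finset (V × V)) :
    rootSet (insert a B) = (rootSet B).erase a.2 := by
  ext v
  simp only [mem_rootSet, mem_erase, forall_mem_insert]
  tauto

omit [Fintype V] [DecidableEq V] in
theorem HasCycle.mono {B C : Finset (V × V)} (h : B ⊆ C) : HasCycle B → HasCycle C :=
  fun ⟨n, f, hf⟩ => ⟨n, f, fun i => h (hf i)⟩

omit [Fintype V] [DecidableEq V] in
theorem not_hasCycle_empty : ¬ HasCycle (∅ : Finset (V × V)) :=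
  fun ⟨_, _, hf⟩ => notMem_empty _ (hf 0)

omit [Fintype V] in
theorem IsBranching.subset {A B C : Finset (V × V)} (hB : IsBranching A B) (h : C ⊆ B) :
    IsBranching A C :=
  ⟨h.trans hB.1, fun v => (card_le_card (filter_subset_filter _ h)).trans (hB.2.1 v),
    fun hc => hB.2.2 (hc.mono h)⟩

omit [Fintype V] in
theorem forall_card_filter_snd_le_one_iff {B : Finset (V × V)} :
    (∀ v, #{a ∈ B | a.2 = v} ≤ 1) ↔ Set.InjOn Prod.snd (B : Set (V × V)) := by
  simp only [card_le_one, mem_filter]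
  exact ⟨fun h a ha b hb hab => h _ a ⟨ha, rfl⟩ b ⟨hb, hab.symm⟩,
    fun h v a ha b hb => h ha.1 hb.1 (ha.2.trans hb.2.symm)⟩

/-- A cycle through the new arc `a` would have to enter `a.1`, which is a root of `B`. -/
theorem not_hasCycle_insert {B : Finset (V × V)} {a : V × V} (hB : ¬ HasCycle B)
    (h1 : a.1 ∈ rootSet B) (hne : a.1 ≠ a.2) : ¬ HasCycle (insert a B) := by
  rintro ⟨n, f, hf⟩
  by_cases hu : ∃ i, f i = a.1 ∧ f (i + 1) = a.2
  · obtain ⟨i, hi1, -⟩ := hu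
    have harc := hf (i - 1)
    rw [sub_add_cancel, hi1] at harc
    rcases mem_insert.1 harc with heq | hmem
    · exact hne (congrArg Prod.snd heq)
    · exact mem_rootSet.1 h1 _ hmem rfl
  · push Not at hu
    refine hB ⟨n, f, fun i => ?_⟩
    rcases mem_insert.1 (hf i) with heq | hmem
    · exact absurd (congrArg Prod.snd heq) (hu i (congrArg Prod.fst heq))
    · exact hmem

omit [DecidableEq V] in
theorem hasCycle_of_forall_exists_parent {B : Finset (V × V)} {X : Finset V} (hX : X.Nonempty)
    (h : ∀ v ∈ X, ∃ p ∈ X, (p, v) ∈ B) : HasCycle B := by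
  choose! par hparX hparB using h
  obtain ⟨x₀, hx₀⟩ := hX
  have hiter : ∀ n, par^[n] x₀ ∈ X := fun n => by
    induction n with
    | zero => exact hx₀
    | succ n ih => rw [Function.iterate_succ_apply']; exact hparX _ ih
  obtain ⟨i, j, hij, heq⟩ := Finite.exists_ne_map_eq_of_infinite fun n => par^[n] x₀
  wlog hlt : i < j generalizing i j
  · exact this j i hij.symm heq.symm (by omega)
  obtain ⟨n, rfl⟩ : ∃ n, j = i + (n + 1) := ⟨j - i - 1, by omega⟩
  -- `x` is a periodic point of `par`; its orbit traversed backwards is the cycle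
  set x := par^[i] x₀
  have hper : par^[n + 1] x = x := by
    rw [← Function.iterate_add_apply, add_comm, ← heq]
  refine ⟨n, fun k => par^[n + 1 - k] x, fun k => ?_⟩
  have hx : ∀ m, par^[m] x ∈ X := fun m => by rw [← Function.iterate_add_apply]; exact hiter _
  dsimp only
  obtain hk | hk := eq_or_ne k (Fin.last n)
  · subst hk
    simp only [Fin.last_add_one, Fin.val_last, Fin.val_zero, Nat.sub_zero, hper,
      Nat.add_sub_cancel_left, Function.iterate_one]
    exact hparB x (hx 0)
  · have hk' : (k : ℕ) + 1 ≤ n := by have := Fin.val_lt_last hk; omega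
    rw [Fin.val_add_one_of_lt (Fin.val_lt_last hk),
      show n + 1 - (k : ℕ) = (n + 1 - (k + 1)) + 1 by omega, Function.iterate_succ_apply']
    exact hparB _ (hx _)

theorem exists_mem_rootSet_of_closed {B : Finset (V × V)} (hB : ¬ HasCycle B) {X : Finset V}
    (hX : X.Nonempty) (hcl : ∀ a ∈ B, a.2 ∈ X → a.1 ∈ X) : ∃ r ∈ X, r ∈ rootSet B := by
  by_contra! h
  refine hB (hasCycle_of_forall_exists_parent hX fun v hv => ?_)
  obtain ⟨a, ha, rfl⟩ : ∃ a ∈ B, a.2 = v := by simpa [mem_rootSet] using h v hv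
  exact ⟨a.1, hcl a ha hv, ha⟩

theorem IsBranching.exists_subset_rootSet_eq {A B : Finset (V × V)} (hB : IsBranching A B)
    {R : Finset V} (h : rootSet B ⊆ R) : ∃ C ⊆ B, IsBranching A C ∧ rootSet C = R := by
  refine ⟨{a ∈ B | a.2 ∉ R}, filter_subset _ _, hB.subset (filter_subset _ _), ?_⟩
  ext v
  simp only [mem_rootSet, mem_filter]
  refine ⟨fun hv => ?_, fun hv a ha hav => ha.2 (hav ▸ hv)⟩
  by_contra hvR
  obtain ⟨a, ha, rfl⟩ : ∃ a ∈ B, a.2 = v := by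
    simpa [mem_rootSet] using fun hr => hvR (h hr)
  exact hv a ⟨ha, hvR⟩ rfl

section Edmonds

-- Arcs are indexed by `α`, so that parallel arcs (a multiset of arcs) are allowed.
variable {α : Type*} (arc : α → V × V)

def inDeg (E : Finset α) (X : Finset V) : ℕ := #{e ∈ E | (arc e).2 ∈ X ∧ (arc e).1 ∉ X}

/-- The number of arcs that a branching with root set `R` needs to enter `X`. -/
def rootDemand (R X : Finset V) : ℕ := if Disjoint X R then 1 else 0

def IsBranchingWithRoots (C : Finset α) (R : Finset V) : Prop :=
  Set.InjOn (fun e => (arc e).2) C ∧ ¬ HasCycle (C.image arc) ∧ rootSet (C.image arc) = R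

def HasDisjointBranchings (E : Finset α) (R₁ R₂ : Finset V) : Prop :=
  ∃ C₁ ⊆ E, ∃ C₂ ⊆ E, Disjoint C₁ C₂ ∧
    IsBranchingWithRoots arc C₁ R₁ ∧ IsBranchingWithRoots arc C₂ R₂

def EdmondsCondition (E : Finset α) (R₁ R₂ : Finset V) : Prop :=
  ∀ X : Finset V, X.Nonempty → rootDemand R₁ X + rootDemand R₂ X ≤ inDeg arc E X

variable {arc} {E C₁ C₂ : Finset α} {e : α} {R R' R₁ R₂ X Y : Finset V}

omit [Fintype V] in
theorem rootDemand_eq_zero {x : V} (hX : x ∈ X) (hR : x ∈ R) : rootDemand R X = 0 :=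
  if_neg (not_disjoint_iff.2 ⟨x, hX, hR⟩)

omit [Fintype V] in
theorem rootDemand_anti (h : X ⊆ Y) : rootDemand R Y ≤ rootDemand R X := by
  unfold rootDemand
  split_ifs with hY hX <;> first | omega | exact absurd (hY.mono_left h) hX

omit [Fintype V] in
theorem rootDemand_anti_right (h : R ⊆ R') : rootDemand R' X ≤ rootDemand R X := by
  unfold rootDemand
  split_ifs with hR' hR <;> first | omega | exact absurd (hR'.mono_right h) hR

omit [Fintype V] in
theorem rootDemand_add_rootDemand_le :
    rootDemand R X + rootDemand R Y ≤ rootDemand R (X ∩ Y) + rootDemand R (X ∪ Y) := by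
  have hX : Disjoint X R → Disjoint (X ∩ Y) R := Disjoint.mono_left inter_subset_left
  have hY : Disjoint Y R → Disjoint (X ∩ Y) R := Disjoint.mono_left inter_subset_right
  simp only [rootDemand, disjoint_union_left]
  split_ifs <;> first | omega | tauto

omit [Fintype V] in
theorem rootDemand_insert_of_notMem {x : V} (hx : x ∉ X) :
    rootDemand (insert x R) X = rootDemand R X := by
  simp only [rootDemand, disjoint_insert_right, hx, not_false_eq_true, true_and]

omit [Fintype V] in
theorem rootDemand_erase_of_notMem {x : V} (hx : x ∉ X) :
    rootDemand (R.erase x) X = rootDemand R X := by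
  simp only [rootDemand, ← disjoint_erase_comm, erase_eq_of_notMem hx]

omit [Fintype V] in
theorem inDeg_le_inDeg_erase_add_one : inDeg arc E X ≤ inDeg arc (E.erase e) X + 1 := by
  have := pred_card_le_card_erase (s := {e ∈ E | (arc e).2 ∈ X ∧ (arc e).1 ∉ X}) (a := e)
  unfold inDeg; rw [filter_erase]; omega

omit [Fintype V] in
theorem inDeg_erase_of_not_enters (h : ¬ ((arc e).2 ∈ X ∧ (arc e).1 ∉ X)) :
    inDeg arc (E.erase e) X = inDeg arc E X := by
  unfold inDeg
  rw [filter_erase, erase_eq_of_notMem]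
  exact fun he => h (mem_filter.1 he).2

omit [Fintype V] in
theorem rootDemand_le_inDeg (h : inDeg arc E X = 0 → ¬ Disjoint X R) :
    rootDemand R X ≤ inDeg arc E X := by
  unfold rootDemand
  split_ifs with hd
  · exact Nat.one_le_iff_ne_zero.2 fun h0 => h h0 hd
  · exact Nat.zero_le _

omit [Fintype V] in
theorem inDeg_eq_zero_iff : inDeg arc E X = 0 ↔ ∀ e ∈ E, (arc e).2 ∈ X → (arc e).1 ∈ X := by
  simp [inDeg, filter_eq_empty_iff]

omit [Fintype V] in
theorem inDeg_inter_eq_zero (hX : inDeg arc E X = 0) (hY : inDeg arc E Y = 0) :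
    inDeg arc E (X ∩ Y) = 0 := by
  rw [inDeg_eq_zero_iff] at *
  intro e he h
  rw [mem_inter] at h ⊢
  exact ⟨hX e he h.1, hY e he h.2⟩

omit [Fintype V] in
theorem inDeg_inter_add_inDeg_union_le :
    inDeg arc E (X ∩ Y) + inDeg arc E (X ∪ Y) ≤ inDeg arc E X + inDeg arc E Y := by
  simp only [inDeg, card_filter, ← sum_add_distrib]
  refine sum_le_sum fun e _ => ?_
  simp only [mem_inter, mem_union]
  split_ifs <;> tauto

omit [Fintype V] in
theorem inDeg_sdiff_le :
    inDeg arc E (X \ R) ≤ inDeg arc E X + #{e ∈ E | (arc e).1 ∈ X ∩ R ∧ (arc e).2 ∈ X \ R} := by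
  refine (card_le_card fun f hf => ?_).trans (card_union_le _ _)
  simp only [mem_union, mem_filter, mem_sdiff, mem_inter] at hf ⊢
  tauto

omit [Fintype V] in
theorem inDeg_add_inDeg_le (h₁ : C₁ ⊆ E) (h₂ : C₂ ⊆ E) (hd : Disjoint C₁ C₂) :
    inDeg arc C₁ X + inDeg arc C₂ X ≤ inDeg arc E X := by
  unfold inDeg
  rw [← card_union_of_disjoint (disjoint_filter_filter hd), ← filter_union]
  exact card_le_card (filter_subset_filter _ (union_subset h₁ h₂))

theorem card_univ_sdiff_insert_lt {x : V} (hx : x ∉ R) : #(univ \ insert x R) < #(univ \ R) := by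
  rw [sdiff_insert]
  exact card_erase_lt_of_mem (mem_sdiff.2 ⟨mem_univ _, hx⟩)

theorem IsBranchingWithRoots.empty : IsBranchingWithRoots arc ∅ univ :=
  ⟨by simp, by simpa using not_hasCycle_empty, by rw [image_empty, rootSet_empty]⟩

theorem IsBranchingWithRoots.insert (hC : IsBranchingWithRoots arc C₁ (insert (arc e).2 R))
    (ht : (arc e).1 ∈ R) (hh : (arc e).2 ∉ R) : IsBranchingWithRoots arc (insert e C₁) R := by
  obtain ⟨hinj, hcyc, hroot⟩ := hC
  have hhead : ∀ f ∈ C₁, (arc f).2 ≠ (arc e).2 := by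
    have : (arc e).2 ∈ rootSet (C₁.image arc) := hroot ▸ mem_insert_self _ _
    simpa [mem_rootSet] using this
  have he : e ∉ C₁ := fun he => hhead e he rfl
  refine ⟨?_, ?_, ?_⟩
  · rw [coe_insert, Set.injOn_insert he]
    exact ⟨hinj, fun ⟨f, hf, hfe⟩ => hhead f hf hfe⟩
  · rw [image_insert]
    exact not_hasCycle_insert hcyc (hroot ▸ mem_insert_of_mem ht) fun h => hh (h ▸ ht)
  · rw [image_insert, rootSet_insert, hroot, erase_insert hh]

theorem IsBranchingWithRoots.rootDemand_le_inDeg (hC : IsBranchingWithRoots arc C₁ R)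
    (hX : X.Nonempty) : rootDemand R X ≤ inDeg arc C₁ X := by
  refine _root_.rootDemand_le_inDeg fun hcl hXR => ?_
  obtain ⟨r, hrX, hr⟩ := exists_mem_rootSet_of_closed hC.2.1 hX (by
    simpa [forall_mem_image] using inDeg_eq_zero_iff.1 hcl)
  exact disjoint_left.1 hXR hrX (hC.2.2 ▸ hr)

theorem HasDisjointBranchings.symm (h : HasDisjointBranchings arc E R₁ R₂) :
    HasDisjointBranchings arc E R₂ R₁ :=
  let ⟨C₁, h₁, C₂, h₂, hd, hb₁, hb₂⟩ := h
  ⟨C₂, h₂, C₁, h₁, hd.symm, hb₂, hb₁⟩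

theorem HasDisjointBranchings.edmondsCondition (h : HasDisjointBranchings arc E R₁ R₂) :
    EdmondsCondition arc E R₁ R₂ := by
  obtain ⟨C₁, h₁, C₂, h₂, hd, hb₁, hb₂⟩ := h
  exact fun X hX => (add_le_add (hb₁.rootDemand_le_inDeg hX) (hb₂.rootDemand_le_inDeg hX)).trans
    (inDeg_add_inDeg_le h₁ h₂ hd)

theorem HasDisjointBranchings.of_erase
    (h : HasDisjointBranchings arc (E.erase e) (insert (arc e).2 R₁) R₂) (he : e ∈ E)
    (ht : (arc e).1 ∈ R₁) (hh : (arc e).2 ∉ R₁) : HasDisjointBranchings arc E R₁ R₂ := by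
  obtain ⟨C₁, h₁, C₂, h₂, hd, hb₁, hb₂⟩ := h
  refine ⟨insert e C₁, insert_subset he (h₁.trans (erase_subset _ _)), C₂,
    h₂.trans (erase_subset _ _), ?_, hb₁.insert ht hh, hb₂⟩
  exact disjoint_insert_left.2 ⟨fun h => notMem_erase e E (h₂ h), hd⟩

omit [Fintype V] in
theorem EdmondsCondition.symm (hc : EdmondsCondition arc E R₁ R₂) :
    EdmondsCondition arc E R₂ R₁ :=
  fun X hX => add_comm (rootDemand R₁ X) _ ▸ hc X hX

omit [Fintype V] in
theorem EdmondsCondition.exists_tight_of_not_erase_insert (hc : EdmondsCondition arc E R₁ R₂)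
    (h : ¬ EdmondsCondition arc (E.erase e) (insert (arc e).2 R₁) R₂) :
    ∃ Y, inDeg arc E Y = rootDemand R₁ Y + rootDemand R₂ Y ∧
      (arc e).2 ∈ Y ∧ (arc e).1 ∉ Y ∧ ¬ Disjoint Y R₁ := by
  simp only [EdmondsCondition, not_forall, not_le] at h
  obtain ⟨Y, hY, hlt⟩ := h
  have hcY := hc Y hY
  by_cases hent : (arc e).2 ∈ Y ∧ (arc e).1 ∉ Y
  · rw [rootDemand_eq_zero hent.1 (mem_insert_self _ _)] at hlt
    have := inDeg_le_inDeg_erase_add_one (arc := arc) (E := E) (e := e) (X := Y)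
    have hR₁ : rootDemand R₁ Y = 0 := by omega
    exact ⟨Y, by omega, hent.1, hent.2, fun hd => by simp [rootDemand, hd] at hR₁⟩
  · have := rootDemand_anti_right (X := Y) (subset_insert (arc e).2 R₁)
    rw [inDeg_erase_of_not_enters hent] at hlt
    omega

omit [Fintype V] in
theorem EdmondsCondition.tight_inter (hc : EdmondsCondition arc E R₁ R₂)
    (hX : inDeg arc E X = rootDemand R₁ X + rootDemand R₂ X)
    (hY : inDeg arc E Y = rootDemand R₁ Y + rootDemand R₂ Y) (hXY : (X ∩ Y).Nonempty) :
    inDeg arc E (X ∩ Y) = rootDemand R₁ (X ∩ Y) + rootDemand R₂ (X ∩ Y) ∧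
      rootDemand R₁ X + rootDemand R₁ Y = rootDemand R₁ (X ∩ Y) + rootDemand R₁ (X ∪ Y) := by
  have := hc _ hXY
  have := hc (X ∪ Y) (hXY.mono (inter_subset_left.trans subset_union_left))
  have := inDeg_inter_add_inDeg_union_le (arc := arc) (E := E) (X := X) (Y := Y)
  have := rootDemand_add_rootDemand_le (R := R₁) (X := X) (Y := Y)
  have := rootDemand_add_rootDemand_le (R := R₂) (X := X) (Y := Y)
  omega

omit [Fintype V] in
theorem EdmondsCondition.exists_arc_of_tight (hc : EdmondsCondition arc E R₁ R₂)
    (hX : inDeg arc E X = rootDemand R₁ X + rootDemand R₂ X) (hXR : ¬ Disjoint X R₁)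
    (hXout : (X \ R₁).Nonempty) : ∃ f ∈ E, (arc f).1 ∈ X ∩ R₁ ∧ (arc f).2 ∈ X \ R₁ := by
  have h := hc _ hXout
  rw [show rootDemand R₁ (X \ R₁) = 1 from if_pos sdiff_disjoint] at h
  rw [show rootDemand R₁ X = 0 from if_neg hXR] at hX
  have := rootDemand_anti (R := R₂) (sdiff_subset : X \ R₁ ⊆ X)
  have := inDeg_sdiff_le (arc := arc) (E := E) (X := X) (R := R₁)
  obtain ⟨f, hf⟩ :=
    card_pos.1 (by omega : 0 < #{e ∈ E | (arc e).1 ∈ X ∩ R₁ ∧ (arc e).2 ∈ X \ R₁})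
  exact ⟨f, mem_filter.1 hf⟩

/-- Lovász's augmentation step. If no arc works, a minimal tight set `X` (entered by exactly
`rootDemand R₁ X + rootDemand R₂ X` arcs) meeting both `R₁` and its complement is uncrossed with
the tight set that blocks an arc from `X ∩ R₁` to `X \ R₁`. -/
theorem EdmondsCondition.exists_erase_insert (hc : EdmondsCondition arc E R₁ R₂)
    (hR₁ : R₁ ≠ univ) : ∃ e ∈ E, (arc e).1 ∈ R₁ ∧ (arc e).2 ∉ R₁ ∧
      EdmondsCondition arc (E.erase e) (insert (arc e).2 R₁) R₂ := by
  by_contra! hcon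
  set F : Finset (Finset V) := {X | inDeg arc E X = rootDemand R₁ X + rootDemand R₂ X ∧
    ¬ Disjoint X R₁ ∧ (X \ R₁).Nonempty}
  have huniv : univ ∈ F := by
    obtain ⟨v, hv⟩ : (univ \ R₁).Nonempty := by
      rwa [sdiff_nonempty, univ_subset_iff]
    have h0 : inDeg arc E univ = 0 := by simp [inDeg]
    have h := h0 ▸ hc univ ⟨v, mem_univ v⟩
    have hR₁ : ¬ Disjoint univ R₁ := fun hd => by simp [rootDemand, hd] at h
    have hR₂ : ¬ Disjoint univ R₂ := fun hd => by simp [rootDemand, hd] at h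
    refine mem_filter.2 ⟨mem_univ _, ?_, hR₁, v, hv⟩
    simp [h0, rootDemand, hR₁, hR₂]
  obtain ⟨X, hXF, hXmin⟩ := exists_min_image F card ⟨univ, huniv⟩
  obtain ⟨hXt, hXR, hXout⟩ := (mem_filter.1 hXF).2
  obtain ⟨f, hfE, hft, hfh⟩ := hc.exists_arc_of_tight hXt hXR hXout
  obtain ⟨Y, hYt, hYh, hYt', hYR⟩ :=
    hc.exists_tight_of_not_erase_insert (hcon f hfE (mem_inter.1 hft).2 (mem_sdiff.1 hfh).2)
  obtain ⟨hZt, hR₁eq⟩ := hc.tight_inter hXt hYt ⟨_, mem_inter.2 ⟨(mem_sdiff.1 hfh).1, hYh⟩⟩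
  by_cases hZR : Disjoint (X ∩ Y) R₁
  · have hUR : ¬ Disjoint (X ∪ Y) R₁ := fun h => hXR (h.mono_left subset_union_left)
    simp [rootDemand, hXR, hYR, hZR, hUR] at hR₁eq
  · have hZF : X ∩ Y ∈ F := mem_filter.2 ⟨mem_univ _, hZt, hZR,
      ⟨_, mem_sdiff.2 ⟨mem_inter.2 ⟨(mem_sdiff.1 hfh).1, hYh⟩, (mem_sdiff.1 hfh).2⟩⟩⟩
    have hlt : #(X ∩ Y) < #X :=
      card_lt_card ⟨inter_subset_left, fun h => hYt' (mem_inter.1 (h (mem_inter.1 hft).1)).2⟩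
    exact absurd (hXmin _ hZF) (not_le.2 hlt)

/-- Edmonds' disjoint branchings theorem, for prescribed root sets. -/
theorem EdmondsCondition.hasDisjointBranchings {E : Finset α} {R₁ R₂ : Finset V}
    (hc : EdmondsCondition arc E R₁ R₂) : HasDisjointBranchings arc E R₁ R₂ := by
  by_cases h₁ : R₁ = univ
  · by_cases h₂ : R₂ = univ
    · subst h₁ h₂
      exact ⟨∅, empty_subset _, ∅, empty_subset _, disjoint_empty_left _, .empty, .empty⟩
    · obtain ⟨e, he, ht, hh, hc'⟩ := hc.symm.exists_erase_insert h₂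
      exact (hc'.hasDisjointBranchings.of_erase he ht hh).symm
  · obtain ⟨e, he, ht, hh, hc'⟩ := hc.exists_erase_insert h₁
    exact hc'.hasDisjointBranchings.of_erase he ht hh
termination_by #(univ \ R₁) + #(univ \ R₂)
decreasing_by
  all_goals have := card_univ_sdiff_insert_lt hh
  all_goals omega

theorem exists_least_inDeg_eq_zero_mem (E : Finset α) (u : V) :
    ∃ X₀, inDeg arc E X₀ = 0 ∧ u ∈ X₀ ∧ ∀ Z, inDeg arc E Z = 0 → u ∈ Z → X₀ ⊆ Z := by
  refine ⟨({x | ∀ Z, inDeg arc E Z = 0 → u ∈ Z → x ∈ Z} : Finset V), ?_,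
    mem_filter.2 ⟨mem_univ u, fun _ _ h => h⟩, fun Z hZ huZ x hx => (mem_filter.1 hx).2 Z hZ huZ⟩
  exact inDeg_eq_zero_iff.2 fun e he h => mem_filter.2 ⟨mem_univ _,
    fun Z hZ huZ => inDeg_eq_zero_iff.1 hZ e he ((mem_filter.1 h).2 Z hZ huZ)⟩

/-- The witness `v` is a vertex of `T` in the least set containing `u` that no arc of `E` enters,
i.e. one from which `u` is reachable. -/
theorem EdmondsCondition.exchange {S T : Finset V} (hc : EdmondsCondition arc E S T) {u : V}
    (huT : u ∉ T) :
    EdmondsCondition arc E (S.erase u) (insert u T) ∨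
      ∃ v ∈ T, v ∉ S ∧ EdmondsCondition arc E (insert v (S.erase u)) ((insert u T).erase v) := by
  by_cases h : ∃ X, inDeg arc E X = 0 ∧ u ∈ X ∧ Disjoint X (S.erase u)
  · obtain ⟨X, hX, huX, hXS⟩ := h
    obtain ⟨X₀, hX₀, huX₀, hX₀le⟩ := exists_least_inDeg_eq_zero_mem (arc := arc) E u
    obtain ⟨v, hvX₀, hvT⟩ : ∃ v ∈ X₀, v ∈ T := by
      by_contra! hd
      have := hc X₀ ⟨u, huX₀⟩
      simp [rootDemand, hX₀, disjoint_left.2 hd] at this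
    have hvu : v ≠ u := fun h => huT (h ▸ hvT)
    have hvS : v ∉ S := fun hvS =>
      disjoint_left.1 hXS (hX₀le X hX huX hvX₀) (mem_erase.2 ⟨hvu, hvS⟩)
    refine .inr ⟨v, hvT, hvS, fun Y hY => ?_⟩
    by_cases huY : u ∈ Y
    · rw [rootDemand_eq_zero huY (mem_erase.2 ⟨hvu.symm, mem_insert_self _ _⟩), add_zero]
      exact rootDemand_le_inDeg fun hY0 =>
        not_disjoint_iff.2 ⟨v, hX₀le Y hY0 huY hvX₀, mem_insert_self _ _⟩
    by_cases hvY : v ∈ Y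
    · rw [rootDemand_eq_zero hvY (mem_insert_self _ _), zero_add]
      refine rootDemand_le_inDeg fun hY0 _ => ?_
      -- otherwise `X₀ ∩ Y` is a nonempty set disjoint from `S` that no arc of `E` enters
      have h := hc (X₀ ∩ Y) ⟨v, mem_inter.2 ⟨hvX₀, hvY⟩⟩
      have hd : Disjoint (X₀ ∩ Y) S := disjoint_left.2 fun x hx hxS =>
        disjoint_left.1 hXS (hX₀le X hX huX (mem_inter.1 hx).1)
          (mem_erase.2 ⟨fun hxu => huY (hxu ▸ (mem_inter.1 hx).2), hxS⟩)
      simp [rootDemand, inDeg_inter_eq_zero hX₀ hY0, hd] at h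
    rw [rootDemand_insert_of_notMem hvY, rootDemand_erase_of_notMem huY,
      rootDemand_erase_of_notMem hvY, rootDemand_insert_of_notMem huY]
    exact hc Y hY
  · push Not at h
    refine .inl fun Y hY => ?_
    by_cases huY : u ∈ Y
    · rw [rootDemand_eq_zero huY (mem_insert_self _ _), add_zero]
      exact rootDemand_le_inDeg fun hY0 => h Y hY0 huY
    · rw [rootDemand_erase_of_notMem huY, rootDemand_insert_of_notMem huY]
      exact hc Y hY

end Edmonds

section Cost

variable {α : Type*} {arc : α → V × V} {E C : Finset α} {A : Finset (V × V)} {w : V × V → ℤ}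
  {R R₁ R₂ : Finset V}

theorem IsBranchingWithRoots.isBranching (hC : IsBranchingWithRoots arc C R)
    (hA : ∀ e ∈ C, arc e ∈ A) : IsBranching A (C.image arc) := by
  refine ⟨fun a ha => ?_, forall_card_filter_snd_le_one_iff.2 ?_, hC.2.1⟩
  · obtain ⟨e, he, rfl⟩ := mem_image.1 ha
    exact hA e he
  · intro a ha b hb hab
    obtain ⟨e, he, rfl⟩ := mem_image.1 (mem_coe.1 ha)
    obtain ⟨f, hf, rfl⟩ := mem_image.1 (mem_coe.1 hb)
    rw [hC.1 he hf hab]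

theorem IsBranchingWithRoots.sum_image (hC : IsBranchingWithRoots arc C R) (w : V × V → ℤ) :
    ∑ a ∈ C.image arc, w a = ∑ e ∈ C, w (arc e) :=
  Finset.sum_image fun _ he _ hf h => hC.1 he hf (congrArg Prod.snd h)

theorem IsBranching.isBranchingWithRoots_map {B : Finset (V × V)} (hB : IsBranching A B)
    {f : V × V ↪ α} (hf : ∀ a, arc (f a) = a) : IsBranchingWithRoots arc (B.map f) (rootSet B) := by
  have himage : (B.map f).image arc = B := by
    simp [map_eq_image, image_image, Function.comp_def, hf]
  refine ⟨?_, by rw [himage]; exact hB.2.2, by rw [himage]⟩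
  rw [coe_map]
  rintro _ ⟨a, ha, rfl⟩ _ ⟨b, hb, rfl⟩ hab
  simp only [hf] at hab
  rw [forall_card_filter_snd_le_one_iff.1 hB.2.1 ha hb hab]

noncomputable def branchingCost (A : Finset (V × V)) (w : V × V → ℤ) (R : Finset V) : WithTop ℤ :=
  (A.powerset.filter (fun B => IsBranching A B ∧ rootSet B = R)).inf
    (fun B => ((∑ a ∈ B, w a : ℤ) : WithTop ℤ))

theorem branchingCost_le {B : Finset (V × V)} (hB : IsBranching A B) :
    branchingCost A w (rootSet B) ≤ ((∑ a ∈ B, w a : ℤ) : WithTop ℤ) :=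
  inf_le (mem_filter.2 ⟨mem_powerset.2 hB.1, hB, rfl⟩)

theorem exists_branchingCost_eq (h : branchingCost A w R ≠ ⊤) :
    ∃ B, IsBranching A B ∧ rootSet B = R ∧
      branchingCost A w R = ((∑ a ∈ B, w a : ℤ) : WithTop ℤ) := by
  unfold branchingCost at h ⊢
  have hne : ({B ∈ A.powerset | IsBranching A B ∧ rootSet B = R}).Nonempty := by
    rw [nonempty_iff_ne_empty]
    rintro he
    simp [he] at h
  obtain ⟨B, hB, hinf⟩ := exists_mem_eq_inf _ hne
    fun B => ((∑ a ∈ B, w a : ℤ) : WithTop ℤ)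
  exact ⟨B, (mem_filter.1 hB).2.1, (mem_filter.1 hB).2.2, hinf⟩

theorem branchingCost_antitone (hw : ∀ a, 0 ≤ w a) : Antitone (branchingCost A w) := by
  intro R R' h
  by_cases hR : branchingCost A w R = ⊤
  · exact hR ▸ le_top
  obtain ⟨B, hB, rfl, hcost⟩ := exists_branchingCost_eq hR
  obtain ⟨C, hCB, hC, rfl⟩ := hB.exists_subset_rootSet_eq h
  rw [hcost]
  exact (branchingCost_le hC).trans
    (WithTop.coe_le_coe.2 (sum_le_sum_of_subset_of_nonneg hCB fun a _ _ => hw a))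

theorem HasDisjointBranchings.branchingCost_add_le (hw : ∀ a, 0 ≤ w a)
    (h : HasDisjointBranchings arc E R₁ R₂) (hA : ∀ e ∈ E, arc e ∈ A) :
    branchingCost A w R₁ + branchingCost A w R₂ ≤ ((∑ e ∈ E, w (arc e) : ℤ) : WithTop ℤ) := by
  obtain ⟨C₁, h₁, C₂, h₂, hd, hb₁, hb₂⟩ := h
  have hcost : ∀ {C R}, C ⊆ E → IsBranchingWithRoots arc C R →
      branchingCost A w R ≤ ((∑ e ∈ C, w (arc e) : ℤ) : WithTop ℤ) := fun hCE hb => by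
    simpa only [hb.2.2, hb.sum_image] using
      branchingCost_le (w := w) (hb.isBranching fun e he => hA e (hCE he))
  calc _ ≤ ((∑ e ∈ C₁, w (arc e) : ℤ) : WithTop ℤ) + ((∑ e ∈ C₂, w (arc e) : ℤ) : WithTop ℤ) :=
        add_le_add (hcost h₁ hb₁) (hcost h₂ hb₂)
    _ = ((∑ e ∈ C₁ ∪ C₂, w (arc e) : ℤ) : WithTop ℤ) := by rw [sum_union hd, WithTop.coe_add]
    _ ≤ _ := WithTop.coe_le_coe.2
        (sum_le_sum_of_subset_of_nonneg (union_subset h₁ h₂) fun e _ _ => hw _)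

/-- Edmonds' theorem applied to the disjoint union of two optimal branchings. -/
theorem branchingCost_exchange (hw : ∀ a, 0 ≤ w a) {S T : Finset V}
    (hS : branchingCost A w S ≠ ⊤) (hT : branchingCost A w T ≠ ⊤) {u : V} (huT : u ∉ T) :
    branchingCost A w (S.erase u) + branchingCost A w (insert u T) ≤
        branchingCost A w S + branchingCost A w T ∨
      ∃ v ∈ T, v ∉ S ∧ branchingCost A w (insert v (S.erase u)) +
        branchingCost A w ((insert u T).erase v) ≤ branchingCost A w S + branchingCost A w T := by
  obtain ⟨B₁, hB₁, rfl, hc₁⟩ := exists_branchingCost_eq hS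
  obtain ⟨B₂, hB₂, rfl, hc₂⟩ := exists_branchingCost_eq hT
  let arc : (V × V) ⊕ (V × V) → V × V := Sum.elim id id
  have hE : HasDisjointBranchings arc (B₁.disjSum B₂) (rootSet B₁) (rootSet B₂) :=
    ⟨_, fun _ h => by obtain ⟨a, ha, rfl⟩ := mem_map.1 h; simpa using ha, _,
      fun _ h => by obtain ⟨a, ha, rfl⟩ := mem_map.1 h; simpa using ha,
      disjoint_map_inl_map_inr _ _, hB₁.isBranchingWithRoots_map fun _ => rfl,
      hB₂.isBranchingWithRoots_map fun _ => rfl⟩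
  have hA : ∀ e ∈ B₁.disjSum B₂, arc e ∈ A := by
    rintro (a | a) h
    · exact hB₁.1 (inl_mem_disjSum.1 h)
    · exact hB₂.1 (inr_mem_disjSum.1 h)
  have hw' : ∑ e ∈ B₁.disjSum B₂, w (arc e) = ∑ a ∈ B₁, w a + ∑ a ∈ B₂, w a := sum_disjSum _ _ _
  rw [hc₁, hc₂, ← WithTop.coe_add, ← hw']
  exact (hE.edmondsCondition.exchange huT).imp
    (fun h => h.hasDisjointBranchings.branchingCost_add_le hw hA)
    fun ⟨v, hvT, hvS, h⟩ => ⟨v, hvT, hvS, h.hasDisjointBranchings.branchingCost_add_le hw hA⟩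

theorem gFun_of_nonneg {η : V → ℤ} (h : ∀ v, 0 ≤ η v) :
    gFun A w η = branchingCost A w {v | 0 < η v} :=
  if_pos h

theorem nonneg_of_gFun_ne_top {η : V → ℤ} (h : gFun A w η ≠ ⊤) : ∀ v, 0 ≤ η v := by
  by_contra hη
  exact h (if_neg hη)

theorem gFun_le_branchingCost (hw : ∀ a, 0 ≤ w a) {η : V → ℤ} (h : ∀ v, 0 ≤ η v)
    (hR : ∀ v ∈ R, 0 < η v) : gFun A w η ≤ branchingCost A w R := by
  rw [gFun_of_nonneg h]
  exact branchingCost_antitone hw fun v hv => mem_filter.2 ⟨mem_univ v, hR v hv⟩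

end Cost

/-- The minimum branching weight function is M♮-convex. -/
theorem gFun_Mnat_convex (A : Finset (V × V)) (w : V × V → ℤ) (hw : ∀ a, 0 ≤ w a) :
    ∀ η ζ : V → ℤ, gFun A w η ≠ ⊤ → gFun A w ζ ≠ ⊤ → ∀ u : V, ζ u < η u →
      (gFun A w (η - chi u) + gFun A w (ζ + chi u) ≤ gFun A w η + gFun A w ζ) ∨
      ∃ v : V, η v < ζ v ∧
        gFun A w (η - chi u + chi v) + gFun A w (ζ + chi u - chi v)
          ≤ gFun A w η + gFun A w ζ := by
  intro η ζ hη hζ u hu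
  have hη₀ := nonneg_of_gFun_ne_top hη
  have hζ₀ := nonneg_of_gFun_ne_top hζ
  rw [gFun_of_nonneg hη₀] at hη ⊢
  rw [gFun_of_nonneg hζ₀] at hζ ⊢
  by_cases hζu : 0 < ζ u
  · refine .inl (add_le_add (gFun_le_branchingCost hw ?_ ?_) (gFun_le_branchingCost hw ?_ ?_))
    all_goals grind [chi, Pi.sub_apply, Pi.add_apply]
  have huT : u ∉ ({v | 0 < ζ v} : Finset V) := by simpa using hζu
  rcases branchingCost_exchange hw hη hζ huT with h | ⟨v, hvT, hvS, h⟩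
  · refine .inl ((add_le_add (gFun_le_branchingCost hw ?_ ?_)
      (gFun_le_branchingCost hw ?_ ?_)).trans h)
    all_goals grind [chi, Pi.sub_apply, Pi.add_apply]
  · refine .inr ⟨v, ?_, (add_le_add (gFun_le_branchingCost hw ?_ ?_)
      (gFun_le_branchingCost hw ?_ ?_)).trans h⟩
    all_goals grind [chi, Pi.sub_apply, Pi.add_apply]
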